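/- Let k ≥ 2 be an even integer and let U_k = (1/√2)·[[1, e^{−iπ/k}], [−e^{iπ/k}, 1]]. Then the state obtained by applying U_k ⊗ I (U_k on the cat-state qubit, identity on a fresh ancilla qubit in state |0⟩) at each of k sites to the 2k-qubit state (|00⟩^{⊗k}+|10⟩^{⊗k})/√2 is inconsistent; equivalently, writing W = U_k ⊗ I as a 4×4 matrix with rows and columns indexed by two-bit strings 00,01,10,11 (encoded as 0,1,2,3), the amplitude (1/√2)(∏_{i=1}^k W_{y_i,0} + ∏_{i=1}^k W_{y_i,2}) vanishes whenever y ∈ {0,1,2,3}^k is a constant string. -/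

import Mathlib

/-!
On a constant string `c = (a, s)` the amplitude is `W_{c,00}^k + W_{c,10}^k`, and
`W = U_k ⊗ I` gives `W_{(a,s),(b,0)} = δ_{s,0} U_{a,b}`. For `s = 0` this is a multiple of
`1 + e^{-iπ} = 0` (row `a = 0`) or of `(-1)^k e^{iπ} + 1 = 0` (row `a = 1`, `k` even).
-/

open Matrix

/-- The 2×2 complex matrix `U_k = (1/√2)·[[1, e^{−iπ/k}], [−e^{iπ/k}, 1]]`. -/
noncomputable def UkMat (k : ℕ) : Matrix (Fin 2) (Fin 2) ℂ :=
  (1 / (Real.sqrt 2 : ℂ)) •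
    !![1, Complex.exp (-(Complex.I * ((Real.pi : ℂ) / (k : ℂ))));
      -Complex.exp (Complex.I * ((Real.pi : ℂ) / (k : ℂ))), 1]

/-- The encoding of a pair of bits `(b₁, b₂)` as the two-bit string `b₁b₂ ∈ {0,1,2,3}`. -/
def bitPairEquiv : Fin 2 × Fin 2 ≃ Fin 4 where
  toFun p := ⟨2 * p.1.val + p.2.val, by have := p.1.isLt; have := p.2.isLt; omega⟩
  invFun i := (⟨i.val / 2, by have := i.isLt; omega⟩, ⟨i.val % 2, by omega⟩)
  left_inv := by decide
  right_inv := by decide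

/-- `W = U_k ⊗ I` as a 4×4 matrix with rows and columns indexed by two-bit strings
`00,01,10,11` (encoded as `0,1,2,3`). -/
noncomputable def WMat (k : ℕ) : Matrix (Fin 4) (Fin 4) ℂ :=
  Matrix.reindex bitPairEquiv bitPairEquiv
    (Matrix.kroneckerMap (· * ·) (UkMat k) (1 : Matrix (Fin 2) (Fin 2) ℂ))

open Complex Real in
lemma exp_I_pi_div_natCast_pow {k : ℕ} (hk : k ≠ 0) : exp (I * (π / k)) ^ k = -1 := by
  rw [← Complex.exp_nat_mul, show (k : ℂ) * (I * (π / k)) = π * I by field_simp, exp_pi_mul_I]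

lemma UkMat_pow_add_pow_eq_zero {k : ℕ} (hk : k ≠ 0) (hke : Even k) (a : Fin 2) :
    UkMat k a 0 ^ k + UkMat k a 1 ^ k = 0 := by
  have hinv : Complex.exp (-(Complex.I * (Real.pi / k))) ^ k = -1 := by
    rw [Complex.exp_neg, inv_pow, exp_I_pi_div_natCast_pow hk, inv_neg, inv_one]
  fin_cases a <;> simp [UkMat, mul_pow, hke.neg_pow, hinv, exp_I_pi_div_natCast_pow hk]

lemma WMat_apply (k : ℕ) (a s b t : Fin 2) :
    WMat k (bitPairEquiv (a, s)) (bitPairEquiv (b, t)) = if s = t then UkMat k a b else 0 := by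
  simp [WMat, Matrix.one_apply]

/-- For an even integer `k ≥ 2`, applying `U_k ⊗ I` at each of `k` sites to
`(|00⟩^{⊗k}+|10⟩^{⊗k})/√2` yields an inconsistent state: the amplitude
`(1/√2)(∏ᵢ W_{yᵢ,00} + ∏ᵢ W_{yᵢ,10})` vanishes on every constant string
`y ∈ {00,01,10,11}^k`. -/
theorem Uk_tensor_id_cat_inconsistent (k : ℕ) (hk : 2 ≤ k) (hke : Even k) :
    ∀ y : Fin k → Fin 4, (∃ c : Fin 4, ∀ i, y i = c) →
      (1 / (Real.sqrt 2 : ℂ)) * ((∏ i, WMat k (y i) 0) + ∏ i, WMat k (y i) 2) = 0 := by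
  rintro y ⟨c, hc⟩
  have hk0 : k ≠ 0 := by omega
  simp only [hc, Finset.prod_const, Finset.card_univ, Fintype.card_fin]
  obtain ⟨⟨a, s⟩, rfl⟩ := bitPairEquiv.surjective c
  rw [show (0 : Fin 4) = bitPairEquiv (0, 0) from rfl, show (2 : Fin 4) = bitPairEquiv (1, 0) from rfl,
    WMat_apply, WMat_apply]
  split_ifs
  · rw [UkMat_pow_add_pow_eq_zero hk0 hke a, mul_zero]
  · simp [zero_pow hk0]
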